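/- Suppose c < c_⋆, where c_⋆ = -1 - x_⋆ - e^{x_⋆} and x_⋆ is the unique positive solution of x e^x/(1+e^x) = 1. Then there exists ψ_c > 0 (depending only on c) such that for every positive integer n and every integer t ≥ 0, max_{x ∈ Ω_n} ‖K_{c,n}^t(x,·) − π_{c,n}(·)‖_TV ≥ 1/2 − 2t e^{−ψ_c n}. -/

import Mathlib

open Real MeasureTheory

noncomputable def _root_.sigmoid (x : ℝ) : ℝ := Real.exp x / (1 + Real.exp x)

noncomputable def mc (c x : ℝ) : ℝ := _root_.sigmoid (c * x)

noncomputable def Ker (c : ℝ) (n : ℕ) (i j : Fin (n + 1)) : ℝ :=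
  (n.choose (j : ℕ)) * _root_.sigmoid (c * (i : ℕ) / n) ^ (j : ℕ) *
    (1 - _root_.sigmoid (c * (i : ℕ) / n)) ^ (n - (j : ℕ))

noncomputable def KerPow (c : ℝ) (n : ℕ) : ℕ → Fin (n + 1) → Fin (n + 1) → ℝ
  | 0 => fun i j => if i = j then 1 else 0
  | t + 1 => fun i j => ∑ k, KerPow c n t i k * Ker c n k j

noncomputable def piWeight (c : ℝ) (n : ℕ) (j : Fin (n + 1)) : ℝ :=
  (n.choose (j : ℕ)) * (1 + Real.exp (c * (j : ℕ) / n)) ^ n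

noncomputable def piDist (c : ℝ) (n : ℕ) (j : Fin (n + 1)) : ℝ :=
  piWeight c n j / ∑ k, piWeight c n k

noncomputable def tvDist {m : ℕ} (p q : Fin m → ℝ) : ℝ :=
  ⨆ A : Finset (Fin m), |∑ i ∈ A, p i - ∑ i ∈ A, q i|

lemma one_add_exp_pos (x : ℝ) : 0 < 1 + Real.exp x := by positivity

lemma sigmoid_pos (x : ℝ) : 0 < _root_.sigmoid x := by
  unfold _root_.sigmoid; positivity

lemma sigmoid_lt_one (x : ℝ) : _root_.sigmoid x < 1 := by
  unfold _root_.sigmoid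
  rw [div_lt_one (one_add_exp_pos x)]
  linarith

lemma sigmoid_strictMono : StrictMono _root_.sigmoid := by
  intro a b hab
  unfold _root_.sigmoid
  rw [div_lt_div_iff₀ (one_add_exp_pos a) (one_add_exp_pos b)]
  have := Real.exp_lt_exp.2 hab
  nlinarith [Real.exp_pos a, Real.exp_pos b]

lemma sigmoid_zero : _root_.sigmoid 0 = 1/2 := by simp [_root_.sigmoid]; norm_num

lemma sigmoid_neg (x : ℝ) : _root_.sigmoid (-x) = 1 - _root_.sigmoid x := by
  unfold _root_.sigmoid
  rw [Real.exp_neg]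
  have h : Real.exp x ≠ 0 := (Real.exp_pos x).ne'
  have h2 : (1 + Real.exp x) ≠ 0 := (one_add_exp_pos x).ne'
  field_simp
  ring

lemma continuous_sigmoid' : Continuous _root_.sigmoid := by
  apply Continuous.div continuous_exp (by continuity)
  exact fun x => (one_add_exp_pos x).ne'

lemma hasDerivAt_sigmoid (x : ℝ) : HasDerivAt _root_.sigmoid (_root_.sigmoid x * (1 - _root_.sigmoid x)) x := by
  have hd : HasDerivAt (fun y => 1 + Real.exp y) (Real.exp x) x := by
    exact (Real.hasDerivAt_exp x).const_add 1
  have h : HasDerivAt _root_.sigmoid ((Real.exp x * (1 + Real.exp x) - Real.exp x * Real.exp x) / (1 + Real.exp x)^2) x :=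
    (Real.hasDerivAt_exp x).div hd (one_add_exp_pos x).ne'
  convert h using 1
  unfold _root_.sigmoid
  have h2 : (1 + Real.exp x) ≠ 0 := (one_add_exp_pos x).ne'
  field_simp

lemma exp_neg_le_quadratic {s : ℝ} (hs : 0 ≤ s) : Real.exp (-s) ≤ 1 - s + s^2/2 := by
  have key : ∀ x ∈ Set.Ici (0:ℝ), ∀ y ∈ Set.Ici (0:ℝ), x ≤ y →
      (fun t => 1 - t + t^2/2 - Real.exp (-t)) x ≤ (fun t => 1 - t + t^2/2 - Real.exp (-t)) y := by
    have hder : ∀ t : ℝ, HasDerivAt (fun t : ℝ => 1 - t + t^2/2 - Real.exp (-t)) (-1 + t - (-Real.exp (-t))) t := by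
      intro t
      have e1 : HasDerivAt (fun t : ℝ => Real.exp (-t)) (-Real.exp (-t)) t := by
        simpa using (hasDerivAt_neg t).exp
      have e2 : HasDerivAt (fun t : ℝ => 1 - t + t^2/2) (-1 + t) t := by
        have h2 := ((hasDerivAt_pow 2 t).div_const 2)
        have h3 : HasDerivAt (fun t : ℝ => 1 - t) (-1) t := by
          simpa using (hasDerivAt_id t).const_sub 1
        convert h3.add h2 using 1
        case e'_8 => ext y; simp only [Pi.add_apply]
        case e'_9 => norm_num
        case e'_4 => rfl
        case e'_5 => rfl
      exact e2.sub e1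
    apply monotoneOn_of_deriv_nonneg (convex_Ici 0)
    · apply Continuous.continuousOn; continuity
    · intro t ht
      exact (hder t).differentiableAt.differentiableWithinAt
    · intro t ht
      rw [(hder t).deriv]
      have h4 := Real.add_one_le_exp (-t)
      linarith
  have h0 := key 0 (by simp) s hs hs
  simp at h0
  linarith

lemma binom_sum' (n : ℕ) (x y : ℝ) :
    ∑ j : Fin (n+1), (n.choose (j:ℕ) : ℝ) * x^(j:ℕ) * y^(n-(j:ℕ)) = (x+y)^n := by
  rw [Fin.sum_univ_eq_sum_range (fun j => (n.choose j : ℝ) * x^j * y^(n-j)), add_pow]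
  apply Finset.sum_congr rfl
  intro j hj; ring

lemma binom_sum (n : ℕ) (p : ℝ) :
    ∑ j : Fin (n+1), (n.choose (j:ℕ) : ℝ) * p^(j:ℕ) * (1-p)^(n-(j:ℕ)) = 1 := by
  rw [binom_sum']; simp

lemma chernoff (n : ℕ) (p q g : ℝ) (hp1 : p ≤ 1) (hq0 : 0 ≤ q) (hg : 0 < g)
    (hpq : q + g ≤ p) (T : Finset (Fin (n+1)))
    (hT : ∀ j ∈ T, ((j:ℕ):ℝ) ≤ q * n) :
    ∑ j ∈ T, (n.choose (j:ℕ) : ℝ) * p^(j:ℕ) * (1-p)^(n-(j:ℕ)) ≤ Real.exp (-(g^2/2) * n) := by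
  have hp0 : 0 ≤ p := le_trans (by linarith) hpq
  have h1p : 0 ≤ 1 - p := by linarith
  set s := g with hs
  have hs0 : 0 < s := hg
  have step1 : ∀ j ∈ T, (n.choose (j:ℕ) : ℝ) * p^(j:ℕ) * (1-p)^(n-(j:ℕ)) ≤
      Real.exp (s*q*n) * ((n.choose (j:ℕ) : ℝ) * (p * Real.exp (-s))^(j:ℕ) * (1-p)^(n-(j:ℕ))) := by
    intro j hj
    have hx : (1:ℝ) ≤ Real.exp (s*(q*n - (j:ℕ))) := by
      rw [Real.one_le_exp_iff]
      have h5 := hT j hj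
      have : (0:ℝ) ≤ q*n - (j:ℕ) := by linarith
      positivity
    have hexpand : Real.exp (s*(q*n - (j:ℕ))) * ((n.choose (j:ℕ) : ℝ) * p^(j:ℕ) * (1-p)^(n-(j:ℕ)))
        = Real.exp (s*q*n) * ((n.choose (j:ℕ) : ℝ) * (p * Real.exp (-s))^(j:ℕ) * (1-p)^(n-(j:ℕ))) := by
      rw [mul_pow, ← Real.exp_nat_mul]
      rw [show s*(q*n - (j:ℕ)) = s*q*n + (j:ℕ)*(-s) by ring, Real.exp_add]
      ring
    calc (n.choose (j:ℕ) : ℝ) * p^(j:ℕ) * (1-p)^(n-(j:ℕ))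
        ≤ Real.exp (s*(q*n - (j:ℕ))) * ((n.choose (j:ℕ) : ℝ) * p^(j:ℕ) * (1-p)^(n-(j:ℕ))) := by
          have ha : (0:ℝ) ≤ (n.choose (j:ℕ) : ℝ) * p^(j:ℕ) * (1-p)^(n-(j:ℕ)) :=
            mul_nonneg (mul_nonneg (Nat.cast_nonneg _) (pow_nonneg hp0 _)) (pow_nonneg h1p _)
          exact le_mul_of_one_le_left ha hx
      _ = _ := hexpand
  have step2 : ∑ j ∈ T, (n.choose (j:ℕ) : ℝ) * p^(j:ℕ) * (1-p)^(n-(j:ℕ))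
      ≤ Real.exp (s*q*n) * (p * Real.exp (-s) + (1-p))^n := by
    calc ∑ j ∈ T, (n.choose (j:ℕ) : ℝ) * p^(j:ℕ) * (1-p)^(n-(j:ℕ))
        ≤ ∑ j ∈ T, Real.exp (s*q*n) * ((n.choose (j:ℕ) : ℝ) * (p * Real.exp (-s))^(j:ℕ) * (1-p)^(n-(j:ℕ))) :=
          Finset.sum_le_sum step1
      _ ≤ ∑ j : Fin (n+1), Real.exp (s*q*n) * ((n.choose (j:ℕ) : ℝ) * (p * Real.exp (-s))^(j:ℕ) * (1-p)^(n-(j:ℕ))) := by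
          apply Finset.sum_le_sum_of_subset_of_nonneg (Finset.subset_univ T)
          intro j _ _
          have hpe : (0:ℝ) ≤ p * Real.exp (-s) := by positivity
          exact mul_nonneg (Real.exp_nonneg _) (mul_nonneg (mul_nonneg (Nat.cast_nonneg _) (pow_nonneg hpe _)) (pow_nonneg h1p _))
      _ = Real.exp (s*q*n) * (p * Real.exp (-s) + (1-p))^n := by
          rw [← Finset.mul_sum, binom_sum']
  have base_le : p * Real.exp (-s) + (1-p) ≤ Real.exp (p * (Real.exp (-s) - 1)) := by
    have := Real.add_one_le_exp (p * (Real.exp (-s) - 1))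
    linarith
  have base_nonneg : 0 ≤ p * Real.exp (-s) + (1-p) := by positivity
  have step3 : Real.exp (s*q*n) * (p * Real.exp (-s) + (1-p))^n
      ≤ Real.exp (s*q*n) * Real.exp (p * (Real.exp (-s) - 1))^n := by
    apply mul_le_mul_of_nonneg_left _ (Real.exp_nonneg _)
    exact pow_le_pow_left₀ base_nonneg base_le n
  have exponent : s*q*n + n * (p * (Real.exp (-s) - 1)) ≤ -(g^2/2) * n := by
    have hq : Real.exp (-s) ≤ 1 - s + s^2/2 := exp_neg_le_quadratic hs0.le
    have h6 : p * (Real.exp (-s) - 1) ≤ -p*s + s^2/2 := by nlinarith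
    have h7 : s*q + (-p*s + s^2/2) ≤ -(g^2/2) := by nlinarith
    have hn : (0:ℝ) ≤ n := Nat.cast_nonneg n
    nlinarith
  calc ∑ j ∈ T, (n.choose (j:ℕ) : ℝ) * p^(j:ℕ) * (1-p)^(n-(j:ℕ))
      ≤ Real.exp (s*q*n) * Real.exp (p * (Real.exp (-s) - 1))^n := le_trans step2 step3
    _ = Real.exp (s*q*n + n * (p * (Real.exp (-s) - 1))) := by
        rw [← Real.exp_nat_mul, ← Real.exp_add]
    _ ≤ Real.exp (-(g^2/2) * n) := Real.exp_le_exp.2 exponent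

lemma ker_nonneg (c : ℝ) (n : ℕ) (i j : Fin (n+1)) : 0 ≤ Ker c n i j := by
  unfold Ker
  have h1 := _root_.sigmoid_pos (c * (i:ℕ) / n)
  have h2 := _root_.sigmoid_lt_one (c * (i:ℕ) / n)
  apply mul_nonneg (mul_nonneg (Nat.cast_nonneg _) (pow_nonneg h1.le _)) (pow_nonneg (by linarith) _)

lemma ker_row_sum (c : ℝ) (n : ℕ) (i : Fin (n+1)) : ∑ j, Ker c n i j = 1 := by
  unfold Ker; exact binom_sum n _

lemma kerpow_nonneg (c : ℝ) (n : ℕ) (t : ℕ) (i j : Fin (n+1)) : 0 ≤ KerPow c n t i j := by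
  induction t generalizing i j with
  | zero =>
    show (0:ℝ) ≤ if i = j then 1 else 0
    split <;> norm_num
  | succ t ih =>
    unfold KerPow
    exact Finset.sum_nonneg fun k _ => mul_nonneg (ih i k) (ker_nonneg c n k j)

lemma kerpow_row_sum (c : ℝ) (n : ℕ) (t : ℕ) (i : Fin (n+1)) : ∑ j, KerPow c n t i j = 1 := by
  induction t generalizing i with
  | zero => unfold KerPow; simp
  | succ t ih =>
    unfold KerPow
    rw [Finset.sum_comm]
    calc ∑ k, ∑ j, KerPow c n t i k * Ker c n k j
        = ∑ k, KerPow c n t i k * ∑ j, Ker c n k j := by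
          apply Finset.sum_congr rfl; intro k _; rw [Finset.mul_sum]
      _ = ∑ k, KerPow c n t i k := by
          apply Finset.sum_congr rfl; intro k _; rw [ker_row_sum, mul_one]
      _ = 1 := ih i

lemma kerpow_succ_left (c : ℝ) (n : ℕ) (t : ℕ) (i j : Fin (n+1)) :
    KerPow c n (t+1) i j = ∑ k, Ker c n i k * KerPow c n t k j := by
  induction t generalizing i j with
  | zero =>
    show (∑ k, KerPow c n 0 i k * Ker c n k j) = _
    simp [KerPow]
  | succ t ih =>
    show (∑ k, KerPow c n (t+1) i k * Ker c n k j) = _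
    calc ∑ k, KerPow c n (t+1) i k * Ker c n k j
        = ∑ k, (∑ m, Ker c n i m * KerPow c n t m k) * Ker c n k j := by
          apply Finset.sum_congr rfl; intro k _; rw [ih]
      _ = ∑ m, Ker c n i m * ∑ k, KerPow c n t m k * Ker c n k j := by
          simp only [Finset.sum_mul, Finset.mul_sum]
          rw [Finset.sum_comm]
          apply Finset.sum_congr rfl; intro m _
          apply Finset.sum_congr rfl; intro k _; ring
      _ = ∑ m, Ker c n i m * KerPow c n (t+1) m j := rfl

lemma mc_anti (c : ℝ) (hc0 : c < 0) : ∀ x y : ℝ, x ≤ y → mc c y ≤ mc c x := by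
  intro x y hxy
  rcases eq_or_lt_of_le hxy with h | h
  · rw [h]
  · exact (_root_.sigmoid_strictMono (by nlinarith : c * y < c * x)).le

lemma hasDerivAt_mc_aff (c lam x : ℝ) :
    HasDerivAt (fun y => mc c y + lam * y) (c * (_root_.sigmoid (c*x) * (1 - _root_.sigmoid (c*x))) + lam) x := by
  have h1 : HasDerivAt (fun y : ℝ => c * y) c x := by
    simpa using (hasDerivAt_id x).const_mul c
  have h2 : HasDerivAt (fun y : ℝ => _root_.sigmoid (c * y)) (_root_.sigmoid (c*x) * (1 - _root_.sigmoid (c*x)) * c) x :=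
    (_root_.hasDerivAt_sigmoid (c*x)).comp x h1
  have h3 : HasDerivAt (fun y : ℝ => lam * y) lam x := by
    simpa using (hasDerivAt_id x).const_mul lam
  have := h2.add h3
  simpa [mc, mul_comm, Pi.add_def] using this

lemma mc_expand (c xb lam : ℝ) (hc0 : c < 0) (hfix : _root_.sigmoid (c * xb) = xb) (hlam : 0 < lam)
    (hD : lam < -c * (_root_.sigmoid (c*xb) * (1 - _root_.sigmoid (c*xb)))) :
    ∃ δ > 0, ∀ e, 0 < e → e ≤ δ → ∀ x,
      (x ≤ xb - e → xb + lam * e ≤ mc c x) ∧ (xb + e ≤ x → mc c x ≤ xb - lam * e) := by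
  set f : ℝ → ℝ := fun x => -c * (_root_.sigmoid (c*x) * (1 - _root_.sigmoid (c*x))) with hf
  have hfcont : Continuous f := by
    apply Continuous.mul continuous_const
    apply Continuous.mul
    · exact continuous_sigmoid'.comp (continuous_const.mul continuous_id)
    · exact Continuous.sub continuous_const (continuous_sigmoid'.comp (continuous_const.mul continuous_id))
  have hmem : f ⁻¹' (Set.Ioi lam) ∈ nhds xb :=
    hfcont.continuousAt.preimage_mem_nhds (Ioi_mem_nhds hD)
  obtain ⟨ε, hε, hball⟩ := Metric.mem_nhds_iff.1 hmem
  refine ⟨ε/2, by positivity, ?_⟩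
  have hfgt : ∀ x ∈ Set.Icc (xb - ε/2) (xb + ε/2), lam < f x := by
    intro x hx
    apply hball
    rw [Metric.mem_ball, Real.dist_eq]
    rw [Set.mem_Icc] at hx
    rw [abs_lt]; constructor <;> linarith
  -- antitonicity of H on the interval
  have haux : ∀ a b : ℝ, xb - ε/2 ≤ a → a ≤ b → b ≤ xb + ε/2 →
      mc c b + lam * b ≤ mc c a + lam * a := by
    have hanti : ∀ a ∈ Set.Icc (xb - ε/2) (xb + ε/2), ∀ b ∈ Set.Icc (xb - ε/2) (xb + ε/2), a ≤ b →
        (fun y => mc c y + lam * y) b ≤ (fun y => mc c y + lam * y) a := by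
      apply antitoneOn_of_deriv_nonpos (convex_Icc _ _)
      · apply Continuous.continuousOn
        exact Continuous.add ((continuous_sigmoid'.comp (continuous_const.mul continuous_id))) (continuous_const.mul continuous_id)
      · intro x _
        exact (hasDerivAt_mc_aff c lam x).differentiableAt.differentiableWithinAt
      · intro x hx
        rw [(hasDerivAt_mc_aff c lam x).deriv]
        have := hfgt x (interior_subset hx)
        rw [hf] at this
        simp only at this
        linarith
    intro a b ha hab hb
    exact hanti a ⟨ha, le_trans hab hb⟩ b ⟨le_trans ha hab, hb⟩ hab
  intro e he heδ x
  constructor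
  · intro hx
    have hcase : ∀ y, xb - ε/2 ≤ y → y ≤ xb - e → xb + lam * e ≤ mc c y := by
      intro y hy1 hy2
      have := haux y xb hy1 (by linarith) (by linarith)
      rw [show mc c xb = xb from hfix] at this
      nlinarith
    rcases le_or_gt (xb - ε/2) x with h | h
    · exact hcase x h hx
    · have h1 : xb + lam * e ≤ xb + lam * (ε/2) := by nlinarith
      have h2 := hcase (xb - ε/2) le_rfl (by linarith)
      have h3 : mc c (xb - ε/2) ≤ mc c x := mc_anti c hc0 x (xb - ε/2) h.le
      have h4 : xb + lam * (ε/2) ≤ mc c (xb - ε/2) := by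
        have := haux (xb - ε/2) xb le_rfl (by linarith) (by linarith)
        rw [show mc c xb = xb from hfix] at this
        nlinarith
      linarith
  · intro hx
    have hcase : ∀ y, y ≤ xb + ε/2 → xb + e ≤ y → mc c y ≤ xb - lam * e := by
      intro y hy1 hy2
      have := haux xb y (by linarith) (by linarith) hy1
      rw [show mc c xb = xb from hfix] at this
      nlinarith
    rcases le_or_gt x (xb + ε/2) with h | h
    · exact hcase x h hx
    · have h2 := hcase (xb + ε/2) le_rfl (by linarith)
      have h3 : mc c x ≤ mc c (xb + ε/2) := mc_anti c hc0 (xb + ε/2) x h.le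
      have h4 : mc c (xb + ε/2) ≤ xb - lam * (ε/2) := by
        have := haux xb (xb + ε/2) (by linarith) (by linarith) le_rfl
        rw [show mc c xb = xb from hfix] at this
        nlinarith
      have h5 : xb - lam * (ε/2) ≤ xb - lam * e := by nlinarith
      linarith

lemma exists_fixed_point (c : ℝ) (hc0 : c < 0) :
    ∃ xb : ℝ, 0 < xb ∧ xb < 1/2 ∧ _root_.sigmoid (c * xb) = xb := by
  set f : ℝ → ℝ := fun x => _root_.sigmoid (c * x) - x with hf
  have hcont : ContinuousOn f (Set.Icc 0 (1/2)) := by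
    apply Continuous.continuousOn
    exact Continuous.sub (continuous_sigmoid'.comp (continuous_const.mul continuous_id)) continuous_id
  have hsub := intermediate_value_Ioo' (by norm_num : (0:ℝ) ≤ 1/2) hcont
  have hf0 : f 0 = 1/2 := by simp [hf, _root_.sigmoid_zero]
  have hfb : f (1/2) < 0 := by
    have : _root_.sigmoid (c * (1/2)) < _root_.sigmoid 0 := _root_.sigmoid_strictMono (by nlinarith)
    rw [_root_.sigmoid_zero] at this
    simp only [hf]; linarith
  have h0mem : (0:ℝ) ∈ Set.Ioo (f (1/2)) (f 0) := by rw [hf0]; exact ⟨hfb, by norm_num⟩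
  obtain ⟨xb, hxb, hfxb⟩ := hsub h0mem
  exact ⟨xb, hxb.1, hxb.2, by simpa [hf, sub_eq_zero] using hfxb⟩

lemma D_gt_one (xs c xb : ℝ) (hxs1 : 0 < xs) (hxs2 : xs * Real.exp xs / (1 + Real.exp xs) = 1)
    (hc : c < -1 - xs - Real.exp xs) (hxb : 0 < xb) (hfix : _root_.sigmoid (c * xb) = xb) :
    1 < -c * (xb * (1 - xb)) := by
  have hexs := Real.exp_pos xs
  have hc0 : c < 0 := by nlinarith
  set u := -(c * xb) with hu
  have hu0 : 0 < u := by nlinarith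
  have hxb_eq : xb = 1 - _root_.sigmoid u := by
    rw [← hfix, show c * xb = -u by rw [hu]; ring, _root_.sigmoid_neg]
  have hexu := Real.exp_pos u
  have hxb_val : xb * (1 + Real.exp u) = 1 := by
    rw [hxb_eq]
    unfold _root_.sigmoid
    field_simp
    ring
  have hxs2' : xs * Real.exp xs = 1 + Real.exp xs := by
    have h1 : (1 + Real.exp xs) ≠ 0 := by positivity
    field_simp at hxs2
    linarith
  have hux : xs < u := by
    by_contra h
    push_neg at h
    have h1 : -c = u * (1 + Real.exp u) := by
      have h2 : -c * xb = u := by rw [hu]; ring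
      nlinarith
    have h2 : Real.exp u ≤ Real.exp xs := Real.exp_le_exp.2 h
    have h3 : -c ≤ xs * (1 + Real.exp xs) := by rw [h1]; nlinarith
    nlinarith
  have hkey : -c * (xb * (1 - xb)) = u * _root_.sigmoid u := by
    have h1 : 1 - xb = _root_.sigmoid u := by rw [hxb_eq]; ring
    have h2 : -c * xb = u := by rw [hu]; ring
    calc -c * (xb * (1 - xb)) = (-c * xb) * (1 - xb) := by ring
      _ = u * _root_.sigmoid u := by rw [h2, h1]
  rw [hkey]
  have h1 : xs * _root_.sigmoid xs = 1 := by
    unfold _root_.sigmoid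
    rw [← mul_div_assoc]
    exact hxs2
  rw [← h1]
  have h2 : _root_.sigmoid xs < _root_.sigmoid u := _root_.sigmoid_strictMono hux
  nlinarith [_root_.sigmoid_pos xs]

lemma piweight_pos (c : ℝ) (n : ℕ) (j : Fin (n+1)) : 0 < piWeight c n j := by
  unfold piWeight
  have h1 : 0 < n.choose (j:ℕ) := Nat.choose_pos (Fin.is_le j)
  have h2 : (0:ℝ) < 1 + Real.exp (c * (j:ℕ) / n) := by positivity
  positivity

lemma pidist_nonneg (c : ℝ) (n : ℕ) (j : Fin (n+1)) : 0 ≤ piDist c n j := by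
  unfold piDist
  have h1 := piweight_pos c n j
  have h2 : 0 < ∑ k, piWeight c n k := Finset.sum_pos (fun k _ => piweight_pos c n k) ⟨j, Finset.mem_univ j⟩
  positivity

lemma pidist_sum (c : ℝ) (n : ℕ) : ∑ j, piDist c n j = 1 := by
  unfold piDist
  rw [← Finset.sum_div]
  apply div_self
  exact (Finset.sum_pos (fun k _ => piweight_pos c n k) ⟨0, Finset.mem_univ 0⟩).ne'


set_option maxHeartbeats 1000000 in
/-- Torpid convergence when c < c⋆: max_x ‖K_{c,n}^t(x,·) − π_{c,n}‖_TV ≥ 1/2 − 2t e^{−ψ_c n}. -/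
theorem torpid_convergence (xs c : ℝ)
    (hxs : 0 < xs ∧ xs * Real.exp xs / (1 + Real.exp xs) = 1)
    (hc : c < -1 - xs - Real.exp xs) :
    ∃ ψ > (0:ℝ), ∀ n : ℕ, 1 ≤ n → ∀ t : ℕ, ∃ x : Fin (n + 1),
      tvDist (KerPow c n t x) (piDist c n) ≥ 1/2 - 2 * t * Real.exp (-ψ * n) := by
  classical
  obtain ⟨hxs1, hxs2⟩ := hxs
  have hexs := Real.exp_pos xs
  have hc0 : c < 0 := by nlinarith
  obtain ⟨xb, hxb0, hxb2, hfix⟩ := exists_fixed_point c hc0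
  have hD1 : 1 < -c * (xb * (1 - xb)) := D_gt_one xs c xb hxs1 hxs2 hc hxb0 hfix
  set D := -c * (xb * (1 - xb)) with hDdef
  set lam := (1 + D) / 2 with hlamdef
  have hlam1 : 1 < lam := by rw [hlamdef]; linarith
  have hlamD : lam < D := by rw [hlamdef]; linarith
  have hDfix : lam < -c * (_root_.sigmoid (c*xb) * (1 - _root_.sigmoid (c*xb))) := by
    rw [hfix]; exact hlamD
  obtain ⟨δ, hδ0, hexp⟩ := mc_expand c xb lam hc0 hfix (by linarith) hDfix
  set η := min δ (min xb (1 - xb)) with hηdef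
  have hη0 : 0 < η := lt_min hδ0 (lt_min hxb0 (by linarith))
  have hηδ : η ≤ δ := min_le_left _ _
  have hηxb : η ≤ xb := le_trans (min_le_right _ _) (min_le_left _ _)
  have hηxb' : η ≤ 1 - xb := le_trans (min_le_right _ _) (min_le_right _ _)
  set g := (lam - 1) * η with hgdef
  have hg0 : 0 < g := mul_pos (by linarith) hη0
  clear_value D lam η g
  refine ⟨g^2/2, by positivity, ?_⟩
  intro n hn t
  have hn0 : (0:ℝ) < n := by exact_mod_cast hn
  set A : Finset (Fin (n+1)) := Finset.univ.filter (fun i => ((i:ℕ):ℝ) ≤ (xb - η) * n) with hAdef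
  set B : Finset (Fin (n+1)) := Finset.univ.filter (fun i => (xb + η) * n ≤ ((i:ℕ):ℝ)) with hBdef
  set S : Bool → Finset (Fin (n+1)) := fun b => if b then B else A with hSdef
  set ε := Real.exp (-(g^2/2) * n) with hεdef
  have hε0 : 0 < ε := Real.exp_pos _
  clear_value A B S ε
  -- step bound
  have hstep : ∀ b : Bool, ∀ i ∈ S b, ∑ j ∈ (S (!b))ᶜ, Ker c n i j ≤ ε := by
    intro b i hi
    have hp_eq : _root_.sigmoid (c * (i:ℕ) / n) = mc c ((i:ℕ) / n) := by
      rw [mc, mul_div_assoc]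
    have hp0 : 0 < _root_.sigmoid (c * (i:ℕ) / n) := _root_.sigmoid_pos _
    have hp1 : _root_.sigmoid (c * (i:ℕ) / n) < 1 := _root_.sigmoid_lt_one _
    cases b with
    | false =>
      have hi' : ((i:ℕ):ℝ) ≤ (xb - η) * n := by
        have h0 := hi
        rw [hSdef] at h0
        simp only [Bool.false_eq_true, if_false, hAdef, Finset.mem_filter] at h0
        exact h0.2
      have hx : ((i:ℕ):ℝ) / n ≤ xb - η := by
        rw [div_le_iff₀ hn0]; linarith
      have hplow : xb + lam * η ≤ _root_.sigmoid (c * (i:ℕ) / n) := by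
        rw [hp_eq]; exact ((hexp η hη0 hηδ (((i:ℕ):ℝ)/n)).1 hx)
      have hpq : (xb + η) + g ≤ _root_.sigmoid (c * (i:ℕ) / n) := by
        have h9 : (xb + η) + g = xb + lam * η := by rw [hgdef]; ring
        linarith
      have hT' : ∀ j ∈ (S (!false))ᶜ, ((j:ℕ):ℝ) ≤ (xb + η) * n := by
        intro j hj
        rw [Finset.mem_compl] at hj
        rw [hSdef] at hj
        simp only [Bool.not_false, if_true, hBdef, Finset.mem_filter,
          Finset.mem_univ, true_and, not_le] at hj
        linarith
      have hch := chernoff n (_root_.sigmoid (c * (i:ℕ) / n)) (xb + η) g hp1.le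
        (by linarith) hg0 hpq ((S (!false))ᶜ) hT'
      rw [hεdef]
      exact le_trans (le_of_eq (Finset.sum_congr rfl (fun j _ => rfl))) hch
    | true =>
      have hi' : (xb + η) * n ≤ ((i:ℕ):ℝ) := by
        have h0 := hi
        rw [hSdef] at h0
        simp only [if_true, hBdef, Finset.mem_filter] at h0
        exact h0.2
      have hx : xb + η ≤ ((i:ℕ):ℝ) / n := by
        rw [le_div_iff₀ hn0]; linarith
      have hphigh : _root_.sigmoid (c * (i:ℕ) / n) ≤ xb - lam * η := by
        rw [hp_eq]; exact ((hexp η hη0 hηδ (((i:ℕ):ℝ)/n)).2 hx)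
      set p := _root_.sigmoid (c * (i:ℕ) / n) with hpdef
      set T : Finset (Fin (n+1)) := (S (!true))ᶜ |>.image Fin.rev with hTdef
      have hrevval : ∀ k : Fin (n+1), ((Fin.rev k : Fin (n+1)) : ℕ) = n - (k:ℕ) := by
        intro k
        rw [Fin.val_rev]
        omega
      have himg : T.image Fin.rev = (S (!true))ᶜ := by
        rw [hTdef, Finset.image_image]
        have h8 : (Fin.rev ∘ Fin.rev : Fin (n+1) → Fin (n+1)) = id := by
          funext k; simp [Fin.rev_rev]
        rw [h8, Finset.image_id]
      have hinj : ∀ x ∈ T, ∀ y ∈ T, Fin.rev x = Fin.rev y → x = y :=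
        fun x _ y _ h => Fin.rev_injective h
      have hsum_eq : ∑ j ∈ (S (!true))ᶜ, Ker c n i j = ∑ k ∈ T, Ker c n i (Fin.rev k) := by
        rw [← himg, Finset.sum_image hinj]
      have hterm : ∀ k ∈ T, Ker c n i (Fin.rev k)
          = (n.choose (k:ℕ) : ℝ) * (1-p)^(k:ℕ) * (1-(1-p))^(n-(k:ℕ)) := by
        intro k _
        unfold Ker
        rw [hrevval k, Nat.choose_symm (Fin.is_le k), Nat.sub_sub_self (Fin.is_le k)]
        rw [← hpdef]
        ring
      have hpq : (1 - xb + η) + g ≤ 1 - p := by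
        have h9 : (1 - xb + η) + g = 1 - (xb - lam * η) := by rw [hgdef]; ring
        linarith
      have hT' : ∀ k ∈ T, ((k:ℕ):ℝ) ≤ (1 - xb + η) * n := by
        intro k hk
        rw [hTdef, Finset.mem_image] at hk
        obtain ⟨j, hj, rfl⟩ := hk
        rw [Finset.mem_compl] at hj
        rw [hSdef] at hj
        simp only [Bool.not_true, Bool.false_eq_true, if_false, hAdef, Finset.mem_filter,
          Finset.mem_univ, true_and, not_le] at hj
        rw [hrevval j]
        have hjle : (j:ℕ) ≤ n := Fin.is_le j
        have h7 : ((n - (j:ℕ) : ℕ) : ℝ) = (n:ℝ) - ((j:ℕ):ℝ) := by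
          rw [Nat.cast_sub hjle]
        rw [h7]
        nlinarith
      have hch := chernoff n (1-p) (1 - xb + η) g (by linarith)
        (by linarith) hg0 hpq T hT'
      rw [hεdef, hsum_eq, Finset.sum_congr rfl hterm]
      exact hch
  -- alternating-parity function
  set F : ℕ → Bool → Bool := fun t b => if Even t then b else !b with hFdef
  clear_value F
  have hFsucc : ∀ (t : ℕ) (b : Bool), F (t+1) b = F t (!b) := by
    intro t b
    rw [hFdef]
    simp only [Nat.even_add_one]
    by_cases h : Even t <;> simp [h]
  have hFinv : ∀ (t : ℕ) (b : Bool), F t (F t b) = b := by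
    intro t b
    rw [hFdef]
    by_cases h : Even t <;> simp [h]
  -- staying bound
  have hstay : ∀ (t : ℕ) (b : Bool) (x : Fin (n+1)), x ∈ S b →
      ∑ j ∈ (S (F t b))ᶜ, KerPow c n t x j ≤ t * ε := by
    intro t
    induction t with
    | zero =>
      intro b x hx
      have hz : ∀ j ∈ (S (F 0 b))ᶜ, KerPow c n 0 x j = 0 := by
        intro j hj
        have hFb : F 0 b = b := by rw [hFdef]; simp
        rw [hFb, Finset.mem_compl] at hj
        have hne : x ≠ j := by rintro rfl; exact hj hx
        show (if x = j then (1:ℝ) else 0) = 0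
        simp [hne]
      rw [Finset.sum_congr rfl hz]
      simp
    | succ t ih =>
      intro b x hx
      rw [hFsucc t b]
      have hrw : ∑ j ∈ (S (F t (!b)))ᶜ, KerPow c n (t+1) x j
          = ∑ k, Ker c n x k * ∑ j ∈ (S (F t (!b)))ᶜ, KerPow c n t k j := by
        rw [Finset.sum_congr rfl (fun j _ => kerpow_succ_left c n t x j)]
        rw [Finset.sum_comm]
        exact Finset.sum_congr rfl fun k _ => (Finset.mul_sum _ _ _).symm
      rw [hrw]
      have hsplit : ∑ k, Ker c n x k * ∑ j ∈ (S (F t (!b)))ᶜ, KerPow c n t k j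
          = (∑ k ∈ S (!b), Ker c n x k * ∑ j ∈ (S (F t (!b)))ᶜ, KerPow c n t k j)
            + ∑ k ∈ (S (!b))ᶜ, Ker c n x k * ∑ j ∈ (S (F t (!b)))ᶜ, KerPow c n t k j := by
        rw [Finset.sum_add_sum_compl]
      rw [hsplit]
      have hbound1 : (∑ k ∈ S (!b), Ker c n x k * ∑ j ∈ (S (F t (!b)))ᶜ, KerPow c n t k j)
          ≤ t * ε := by
        calc (∑ k ∈ S (!b), Ker c n x k * ∑ j ∈ (S (F t (!b)))ᶜ, KerPow c n t k j)
            ≤ ∑ k ∈ S (!b), Ker c n x k * (t * ε) := by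
              apply Finset.sum_le_sum
              intro k hk
              exact mul_le_mul_of_nonneg_left (ih (!b) k hk) (ker_nonneg c n x k)
          _ = (∑ k ∈ S (!b), Ker c n x k) * (t * ε) := by rw [Finset.sum_mul]
          _ ≤ 1 * (t * ε) := by
              apply mul_le_mul_of_nonneg_right _ (by positivity)
              rw [← ker_row_sum c n x]
              exact Finset.sum_le_sum_of_subset_of_nonneg (Finset.subset_univ _)
                (fun k _ _ => ker_nonneg c n x k)
          _ = t * ε := one_mul _
      have hbound2 : (∑ k ∈ (S (!b))ᶜ, Ker c n x k * ∑ j ∈ (S (F t (!b)))ᶜ, KerPow c n t k j)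
          ≤ ε := by
        calc (∑ k ∈ (S (!b))ᶜ, Ker c n x k * ∑ j ∈ (S (F t (!b)))ᶜ, KerPow c n t k j)
            ≤ ∑ k ∈ (S (!b))ᶜ, Ker c n x k * 1 := by
              apply Finset.sum_le_sum
              intro k hk
              apply mul_le_mul_of_nonneg_left _ (ker_nonneg c n x k)
              rw [← kerpow_row_sum c n t k]
              exact Finset.sum_le_sum_of_subset_of_nonneg (Finset.subset_univ _)
                (fun j _ _ => kerpow_nonneg c n t k j)
          _ = ∑ k ∈ (S (!b))ᶜ, Ker c n x k := by simp
          _ ≤ ε := hstep b x hx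
      push_cast
      linarith
  -- pi facts
  have hπ1 : ∑ j, piDist c n j = 1 := pidist_sum c n
  have hdisj : Disjoint A B := by
    rw [Finset.disjoint_left]
    intro a ha hb
    rw [hAdef, Finset.mem_filter] at ha
    rw [hBdef, Finset.mem_filter] at hb
    nlinarith [ha.2, hb.2]
  have hhalf : ∃ bT : Bool, ∑ j ∈ S bT, piDist c n j ≤ 1/2 := by
    by_cases h : ∑ j ∈ B, piDist c n j ≤ 1/2
    · exact ⟨true, by rw [hSdef]; simpa using h⟩
    · refine ⟨false, ?_⟩
      rw [hSdef]
      simp only [Bool.false_eq_true, if_false]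
      push_neg at h
      have hsum : ∑ j ∈ A, piDist c n j + ∑ j ∈ B, piDist c n j ≤ 1 := by
        rw [← Finset.sum_union hdisj, ← hπ1]
        exact Finset.sum_le_sum_of_subset_of_nonneg (Finset.subset_univ _)
          (fun j _ _ => pidist_nonneg c n j)
      linarith
  obtain ⟨bT, hbT⟩ := hhalf
  -- nonemptiness
  have hSne : ∀ b : Bool, (S b).Nonempty := by
    intro b
    cases b with
    | false =>
      refine ⟨0, ?_⟩
      rw [hSdef]
      simp only [Bool.false_eq_true, if_false, hAdef, Finset.mem_filter, Finset.mem_univ, true_and,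
        Fin.val_zero, Nat.cast_zero]
      exact mul_nonneg (by linarith) hn0.le
    | true =>
      refine ⟨⟨n, Nat.lt_succ_self n⟩, ?_⟩
      rw [hSdef]
      simp only [if_true, hBdef, Finset.mem_filter, Finset.mem_univ, true_and]
      show (xb + η) * n ≤ ((n:ℕ):ℝ)
      have h1 : xb + η ≤ 1 := by linarith
      calc (xb + η) * (n:ℝ) ≤ 1 * (n:ℝ) := mul_le_mul_of_nonneg_right h1 hn0.le
        _ = ((n:ℕ):ℝ) := one_mul _
  obtain ⟨x0, hx0⟩ := hSne (F t bT)
  refine ⟨x0, ?_⟩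
  have hFt : F t (F t bT) = bT := hFinv t bT
  have hstay' : ∑ j ∈ (S bT)ᶜ, KerPow c n t x0 j ≤ t * ε := by
    have := hstay t (F t bT) x0 hx0
    rw [hFt] at this
    exact this
  have hmass : 1 - t * ε ≤ ∑ j ∈ S bT, KerPow c n t x0 j := by
    have hcompl : ∑ j ∈ S bT, KerPow c n t x0 j + ∑ j ∈ (S bT)ᶜ, KerPow c n t x0 j = 1 := by
      rw [Finset.sum_add_sum_compl]
      exact kerpow_row_sum c n t x0
    linarith
  have hbdd : BddAbove (Set.range fun (Aset : Finset (Fin (n+1))) =>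
      |∑ i ∈ Aset, KerPow c n t x0 i - ∑ i ∈ Aset, piDist c n i|) :=
    Set.Finite.bddAbove (Set.finite_range _)
  have htv : |∑ i ∈ S bT, KerPow c n t x0 i - ∑ i ∈ S bT, piDist c n i|
      ≤ tvDist (KerPow c n t x0) (piDist c n) := le_ciSup hbdd (S bT)
  have habs : (∑ i ∈ S bT, KerPow c n t x0 i) - ∑ i ∈ S bT, piDist c n i
      ≤ |∑ i ∈ S bT, KerPow c n t x0 i - ∑ i ∈ S bT, piDist c n i| := le_abs_self _
  have htε : 0 ≤ (t:ℝ) * ε := mul_nonneg (Nat.cast_nonneg t) hε0.le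
  have : 1/2 - 2 * t * ε ≤ tvDist (KerPow c n t x0) (piDist c n) := by
    have h1 : 1/2 - 2 * t * ε ≤ (1 - t * ε) - 1/2 := by linarith
    linarith
  exact this
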